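/- Let X be the self-adjoint operator on L²(−δ,δ) associated with the form x[f] = ∫_{−δ}^{δ}|f'|² − β(|f(δ)|² + |f(−δ)|²) + M²∫_{−δ}^{0}|f|² + m²∫_0^δ|f|² − (M−m)|f(0)|², on H¹(−δ,δ), with m < 0 < M and β > 0 fixed. Then E₁(X) = O(e^{−min(|m|,M)δ/2}) as min(−m, M) → +∞, and for each j ≥ 2 there are constants C₁, C₂ > 0 with E_j(X) ≥ min(m², M²) + C₁ j² − C₂. -/

import Mathlib

/-!
Below both thresholds, i.e. for `λ < min(m², M²) - β²`, each piece of an eigenfunction solves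
`f'' = k² f` with a Robin condition at its outer end, so it is a multiple of the positive
solution `(k - β) e^{kt} + (k + β) e^{-kt}` (with `k² = M² - λ`, resp. `m² - λ`). Such `λ` are
therefore the zeros of a secular function, the jump condition at `0` divided by `f(0)`. The
log-derivative of the Robin solution at `δ` is `k` up to `O(k e^{-2kδ})`, so the secular function
is positive at `0` and negative on `(-∞, -e^{-ζδ/2}]` once `ζ = min(|m|, M)` is large: this pins
`E₁` in between. Two eigenfunctions below the thresholds have pieces of constant sign, so Green's
identity (orthogonality) rules out a second one, whence `E_j ≥ E₂ ≥ min(m², M²) - β²`.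
-/

/-- `lam` is an eigenvalue of the two-mass operator `X` on `(−δ, δ)`:
`X f = −f'' + (M² 1_{(−δ,0)} + m² 1_{(0,δ)}) f` with boundary conditions
`f'(δ) = β f(δ)`, `f'(−δ) = −β f(−δ)` and jump condition
`f'(0⁺) − f'(0⁻) + (|m| + M) f(0) = 0`, encoded through the two smooth pieces
`u` (on `[−δ,0]`) and `v` (on `[0,δ]`). -/
def IsXEigen (δ β m M lam : ℝ) : Prop :=
  ∃ u v : ℝ → ℝ, ContDiff ℝ 2 u ∧ ContDiff ℝ 2 v ∧
    ((∃ t ∈ Set.Icc (-δ) 0, u t ≠ 0) ∨ (∃ t ∈ Set.Icc 0 δ, v t ≠ 0)) ∧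
    (∀ t, deriv (deriv u) t = (M ^ 2 - lam) * u t) ∧
    (∀ t, deriv (deriv v) t = (m ^ 2 - lam) * v t) ∧
    u 0 = v 0 ∧
    deriv v 0 - deriv u 0 + (|m| + M) * u 0 = 0 ∧
    deriv u (-δ) = -β * u (-δ) ∧
    deriv v δ = β * v δ

open Real Filter Set

section Wronskian

variable {u u' w w' : ℝ → ℝ} {c₁ c₂ : ℝ}

theorem hasDerivAt_wronskian (hu : ∀ t, HasDerivAt u (u' t) t)
    (hu' : ∀ t, HasDerivAt u' (c₁ * u t) t) (hw : ∀ t, HasDerivAt w (w' t) t)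
    (hw' : ∀ t, HasDerivAt w' (c₂ * w t) t) (t : ℝ) :
    HasDerivAt (fun s => u' s * w s - u s * w' s) ((c₁ - c₂) * (u t * w t)) t :=
  (((hu' t).mul (hw t)).sub ((hu t).mul (hw' t))).congr_deriv (by ring)

theorem sub_mul_integral_mul_eq_wronskian (hu : ∀ t, HasDerivAt u (u' t) t)
    (hu' : ∀ t, HasDerivAt u' (c₁ * u t) t) (hw : ∀ t, HasDerivAt w (w' t) t)
    (hw' : ∀ t, HasDerivAt w' (c₂ * w t) t) (a b : ℝ) :
    (c₁ - c₂) * ∫ s in a..b, u s * w s =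
      (u' b * w b - u b * w' b) - (u' a * w a - u a * w' a) := by
  have hcont : Continuous fun s => (c₁ - c₂) * (u s * w s) :=
    continuous_const.mul <| (continuous_iff_continuousAt.2 fun t => (hu t).continuousAt).mul
      (continuous_iff_continuousAt.2 fun t => (hw t).continuousAt)
  rw [← intervalIntegral.integral_const_mul]
  exact intervalIntegral.integral_eq_sub_of_hasDerivAt
    (fun t _ => hasDerivAt_wronskian hu hu' hw hw' t) (hcont.intervalIntegrable a b)

theorem exists_eq_mul_of_wronskian_eq_zero (hu : ∀ t, HasDerivAt u (u' t) t)
    (hu' : ∀ t, HasDerivAt u' (c₁ * u t) t) (hw : ∀ t, HasDerivAt w (w' t) t)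
    (hw' : ∀ t, HasDerivAt w' (c₁ * w t) t) (hw₀ : ∀ t, w t ≠ 0) {a : ℝ}
    (ha : u' a * w a = u a * w' a) :
    ∃ A, ∀ t, u t = A * w t ∧ u' t = A * w' t := by
  have hW : ∀ t, u' t * w t - u t * w' t = 0 := fun t => by
    have hconst := is_const_of_deriv_eq_zero
      (fun s => (hasDerivAt_wronskian hu hu' hw hw' s).differentiableAt)
      (fun s => by rw [(hasDerivAt_wronskian hu hu' hw hw' s).deriv, sub_self, zero_mul])
    rw [hconst t a, ha, sub_self]
  have hq : ∀ t, HasDerivAt (fun s => u s / w s) 0 t := fun t =>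
    ((hu t).div (hw t) (hw₀ t)).congr_deriv (by rw [hW t, zero_div])
  refine ⟨u a / w a, fun t => ?_⟩
  have hut : u t = u a / w a * w t := by
    rw [← is_const_of_deriv_eq_zero (fun s => (hq s).differentiableAt)
      (fun s => (hq s).deriv) t a, div_mul_cancel₀ _ (hw₀ t)]
  refine ⟨hut, mul_right_cancel₀ (hw₀ t) ?_⟩
  linear_combination hW t + w' t * hut

theorem deriv_deriv_eq_of_hasDerivAt (hu : ∀ t, HasDerivAt u (u' t) t)
    (hu' : ∀ t, HasDerivAt u' (c₁ * u t) t) (t : ℝ) : deriv (deriv u) t = c₁ * u t := by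
  rw [show deriv u = u' from funext fun s => (hu s).deriv, (hu' t).deriv]

end Wronskian

theorem ContDiff.hasDerivAt_deriv {u : ℝ → ℝ} (hu : ContDiff ℝ 2 u) (t : ℝ) :
    HasDerivAt u (deriv u t) t ∧ HasDerivAt (deriv u) (deriv (deriv u) t) t := by
  have h := contDiff_succ_iff_deriv.mp (show ContDiff ℝ (1 + 1) u from hu)
  exact ⟨(h.1 t).hasDerivAt, (h.2.2.differentiable one_ne_zero t).hasDerivAt⟩

theorem ContDiff.hasDerivAt_deriv_of_deriv_deriv {u : ℝ → ℝ} {c : ℝ} (hu : ContDiff ℝ 2 u)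
    (hode : ∀ t, deriv (deriv u) t = c * u t) (t : ℝ) :
    HasDerivAt (deriv u) (c * u t) t :=
  hode t ▸ (hu.hasDerivAt_deriv t).2

section Robin

variable (β k δ : ℝ)

/-- The solution of `f'' = k² f` with the Robin condition `f'(0) = -β f(0)`. -/
noncomputable def robinSol (t : ℝ) : ℝ := (k - β) * exp (k * t) + (k + β) * exp (-(k * t))

noncomputable def robinSolDeriv (t : ℝ) : ℝ :=
  k * ((k - β) * exp (k * t) - (k + β) * exp (-(k * t)))

noncomputable def robinLogDeriv (t : ℝ) : ℝ := robinSolDeriv β k t / robinSol β k t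

theorem hasDerivAt_robinSol (t : ℝ) : HasDerivAt (robinSol β k) (robinSolDeriv β k t) t := by
  have h : HasDerivAt (fun s => k * s) k t := by simpa using (hasDerivAt_id t).const_mul k
  have h' : HasDerivAt (fun s => -(k * s)) (-k) t := h.neg
  exact ((h.exp.const_mul (k - β)).add (h'.exp.const_mul (k + β))).congr_deriv
    (by simp only [robinSolDeriv]; ring)

theorem hasDerivAt_robinSolDeriv (t : ℝ) :
    HasDerivAt (robinSolDeriv β k) (k ^ 2 * robinSol β k t) t := by
  have h : HasDerivAt (fun s => k * s) k t := by simpa using (hasDerivAt_id t).const_mul k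
  have h' : HasDerivAt (fun s => -(k * s)) (-k) t := h.neg
  exact (((h.exp.const_mul (k - β)).sub (h'.exp.const_mul (k + β))).const_mul k).congr_deriv
    (by simp only [robinSol]; ring)

theorem robinSolDeriv_zero : robinSolDeriv β k 0 = -β * robinSol β k 0 := by
  simp only [robinSolDeriv, robinSol, mul_zero, neg_zero, exp_zero]; ring

@[fun_prop]
theorem continuous_robinSol : Continuous (robinSol β k) := by
  unfold robinSol; fun_prop

theorem contDiff_robinSol : ContDiff ℝ 2 (robinSol β k) := by
  unfold robinSol; fun_prop

variable {β k}

theorem robinSol_pos (hk : |β| < k) (t : ℝ) : 0 < robinSol β k t := by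
  obtain ⟨h₁, h₂⟩ := abs_lt.mp hk
  have : 0 < k - β := by linarith
  have : 0 < k + β := by linarith
  unfold robinSol; positivity

theorem continuousOn_robinLogDeriv (t : ℝ) :
    ContinuousOn (fun k => robinLogDeriv β k t) (Ioi |β|) := by
  refine ContinuousOn.div (by unfold robinSolDeriv; fun_prop) (by unfold robinSol; fun_prop)
    fun k hk => (robinSol_pos hk t).ne'

theorem sub_robinLogDeriv_mul (hk : |β| < k) :
    (k - robinLogDeriv β k δ) * robinSol β k δ = 2 * k * (k + β) * exp (-(k * δ)) := by
  rw [robinLogDeriv, sub_mul, div_mul_cancel₀ _ (robinSol_pos hk δ).ne']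
  simp only [robinSol, robinSolDeriv]; ring

theorem robinLogDeriv_lt (hk : |β| < k) : robinLogDeriv β k δ < k := by
  have h := sub_robinLogDeriv_mul δ hk
  have : 0 < k + β := by linarith [neg_abs_le β]
  have : 0 < 2 * k * (k + β) * exp (-(k * δ)) := by
    have : 0 < k := (abs_nonneg β).trans_lt hk
    positivity
  nlinarith [robinSol_pos hk δ]

theorem sub_robinLogDeriv_le (hk : 2 * |β| ≤ k) (hk₀ : 0 < k) :
    k - robinLogDeriv β k δ ≤ 6 * k * exp (-(2 * k * δ)) := by
  have hβk : |β| < k := by linarith [abs_nonneg β]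
  have hβ : 2 * β ≤ k := by linarith [le_abs_self β]
  have hP := robinSol_pos hβk δ
  have hexp : exp (-(2 * k * δ)) * exp (k * δ) = exp (-(k * δ)) := by
    rw [← exp_add]; ring_nf
  have hP_ge : (k - β) * exp (k * δ) ≤ robinSol β k δ := by
    have : 0 < k + β := by linarith [neg_abs_le β]
    simp only [robinSol]; nlinarith [exp_pos (-(k * δ))]
  refine le_of_mul_le_mul_right ?_ hP
  calc (k - robinLogDeriv β k δ) * robinSol β k δ
      = 2 * k * (k + β) * exp (-(k * δ)) := sub_robinLogDeriv_mul δ hβk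
    _ ≤ 6 * k * (k - β) * exp (-(k * δ)) := by
      gcongr ?_ * _; nlinarith
    _ = 6 * k * exp (-(2 * k * δ)) * ((k - β) * exp (k * δ)) := by rw [← hexp]; ring
    _ ≤ 6 * k * exp (-(2 * k * δ)) * robinSol β k δ := by gcongr

end Robin

theorem abs_lt_sqrt_of_sq_lt {β c : ℝ} (h : β ^ 2 < c) : |β| < √c :=
  (lt_sqrt (abs_nonneg β)).2 (by rwa [sq_abs])

section Pieces

variable {β k δ : ℝ}

theorem hasDerivAt_robinSol_add (t : ℝ) :
    HasDerivAt (fun s => robinSol β k (s + δ)) (robinSolDeriv β k (t + δ)) t :=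
  (hasDerivAt_robinSol β k (t + δ)).comp_add_const t δ

theorem hasDerivAt_robinSolDeriv_add (t : ℝ) :
    HasDerivAt (fun s => robinSolDeriv β k (s + δ)) (k ^ 2 * robinSol β k (t + δ)) t :=
  (hasDerivAt_robinSolDeriv β k (t + δ)).comp_add_const t δ

theorem hasDerivAt_robinSol_sub (t : ℝ) :
    HasDerivAt (fun s => robinSol β k (δ - s)) (-robinSolDeriv β k (δ - t)) t :=
  (hasDerivAt_robinSol β k (δ - t)).comp_const_sub δ t

theorem hasDerivAt_neg_robinSolDeriv_sub (t : ℝ) :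
    HasDerivAt (fun s => -robinSolDeriv β k (δ - s)) (k ^ 2 * robinSol β k (δ - t)) t :=
  ((hasDerivAt_robinSolDeriv β k (δ - t)).comp_const_sub δ t).neg.congr_deriv (neg_neg _)

theorem exists_eq_mul_robinSol_add {u : ℝ → ℝ} (hu : ContDiff ℝ 2 u)
    (hode : ∀ t, deriv (deriv u) t = k ^ 2 * u t) (hrob : deriv u (-δ) = -β * u (-δ))
    (hk : |β| < k) :
    ∃ A, ∀ t, u t = A * robinSol β k (t + δ) ∧ deriv u t = A * robinSolDeriv β k (t + δ) :=
  exists_eq_mul_of_wronskian_eq_zero (fun t => (hu.hasDerivAt_deriv t).1)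
    (hu.hasDerivAt_deriv_of_deriv_deriv hode) hasDerivAt_robinSol_add
    hasDerivAt_robinSolDeriv_add (fun t => (robinSol_pos hk _).ne') (a := -δ)
    (by rw [hrob, neg_add_cancel, robinSolDeriv_zero]; ring)

theorem exists_eq_mul_robinSol_sub {v : ℝ → ℝ} (hv : ContDiff ℝ 2 v)
    (hode : ∀ t, deriv (deriv v) t = k ^ 2 * v t) (hrob : deriv v δ = β * v δ)
    (hk : |β| < k) :
    ∃ B, ∀ t, v t = B * robinSol β k (δ - t) ∧ deriv v t = B * -robinSolDeriv β k (δ - t) :=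
  exists_eq_mul_of_wronskian_eq_zero (fun t => (hv.hasDerivAt_deriv t).1)
    (hv.hasDerivAt_deriv_of_deriv_deriv hode) hasDerivAt_robinSol_sub
    hasDerivAt_neg_robinSolDeriv_sub (fun t => (robinSol_pos hk _).ne') (a := δ)
    (by rw [hrob, sub_self, robinSolDeriv_zero]; ring)

theorem exists_robinSol_repr {u v : ℝ → ℝ} {c₁ c₂ : ℝ} (hu : ContDiff ℝ 2 u)
    (hv : ContDiff ℝ 2 v) (hnt : (∃ t ∈ Icc (-δ) 0, u t ≠ 0) ∨ (∃ t ∈ Icc 0 δ, v t ≠ 0))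
    (hodeu : ∀ t, deriv (deriv u) t = c₁ * u t) (hodev : ∀ t, deriv (deriv v) t = c₂ * v t)
    (hmatch : u 0 = v 0) (hrobu : deriv u (-δ) = -β * u (-δ)) (hrobv : deriv v δ = β * v δ)
    (hc₁ : β ^ 2 < c₁) (hc₂ : β ^ 2 < c₂) :
    ∃ A B, 0 < A * B ∧
      (∀ t, u t = A * robinSol β √c₁ (t + δ) ∧
        deriv u t = A * robinSolDeriv β √c₁ (t + δ)) ∧
      (∀ t, v t = B * robinSol β √c₂ (δ - t) ∧
        deriv v t = B * -robinSolDeriv β √c₂ (δ - t)) := by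
  rw [← sq_sqrt ((sq_nonneg β).trans hc₁.le)] at hodeu
  rw [← sq_sqrt ((sq_nonneg β).trans hc₂.le)] at hodev
  have hk := abs_lt_sqrt_of_sq_lt hc₁
  have hκ := abs_lt_sqrt_of_sq_lt hc₂
  obtain ⟨A, hA⟩ := exists_eq_mul_robinSol_add hu hodeu hrobu hk
  obtain ⟨B, hB⟩ := exists_eq_mul_robinSol_sub hv hodev hrobv hκ
  have hAB : A * robinSol β √c₁ δ = B * robinSol β √c₂ δ := by
    simpa only [(hA 0).1, (hB 0).1, zero_add, sub_zero] using hmatch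
  have hA₀ : A ≠ 0 := by
    rintro rfl
    have hB₀ : B = 0 := by
      simpa [(robinSol_pos hκ δ).ne'] using hAB.symm
    rcases hnt with ⟨t, -, ht⟩ | ⟨t, -, ht⟩
    · exact ht (by simp [(hA t).1])
    · exact ht (by simp [(hB t).1, hB₀])
  refine ⟨A, B, (mul_pos_iff_of_pos_right (robinSol_pos hκ δ)).mp ?_, hA, hB⟩
  calc 0 < A ^ 2 * robinSol β √c₁ δ := by have := robinSol_pos hk δ; positivity
    _ = A * B * robinSol β √c₂ δ := by rw [mul_assoc, ← hAB]; ring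

end Pieces

/-- Below both thresholds `lam` is an eigenvalue iff this vanishes: it is the jump condition at
`0` for the left piece `robinSol (t + δ)` and the right piece `robinSol (δ - t)`, divided by
`f(0)`. -/
noncomputable def secular (δ β m M lam : ℝ) : ℝ :=
  |m| + M - robinLogDeriv β (√(M ^ 2 - lam)) δ - robinLogDeriv β (√(m ^ 2 - lam)) δ

theorem mul_add_mul_ne_zero {a b I J : ℝ} (hab : 0 < a * b) (hI : 0 < I) (hJ : 0 < J) :
    a * I + b * J ≠ 0 := by
  intro h
  have : a ^ 2 * I + a * b * J = 0 := by linear_combination a * h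
  nlinarith [mul_pos hab hJ, mul_nonneg (sq_nonneg a) hI.le]

theorem exists_integral_mul_eq_mul_pos {f g φ ψ : ℝ → ℝ} {A B a b : ℝ} (hab : a < b)
    (hf : ∀ t, f t = A * φ t) (hg : ∀ t, g t = B * ψ t) (hφ : Continuous φ)
    (hψ : Continuous ψ) (hφ₀ : ∀ t, 0 < φ t) (hψ₀ : ∀ t, 0 < ψ t) :
    ∃ I > 0, ∫ s in a..b, f s * g s = A * B * I := by
  refine ⟨∫ s in a..b, φ s * ψ s, intervalIntegral.intervalIntegral_pos_of_pos
    ((hφ.mul hψ).intervalIntegrable a b) (fun t => mul_pos (hφ₀ t) (hψ₀ t)) hab, ?_⟩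
  rw [← intervalIntegral.integral_const_mul]
  congr 1 with s
  rw [hf, hg]; ring

section Eigen

variable {δ β m M lam : ℝ}

theorem secular_mul (hM : |β| < √(M ^ 2 - lam)) (hm : |β| < √(m ^ 2 - lam)) :
    secular δ β m M lam * (robinSol β √(M ^ 2 - lam) δ * robinSol β √(m ^ 2 - lam) δ) =
      (|m| + M) * (robinSol β √(M ^ 2 - lam) δ * robinSol β √(m ^ 2 - lam) δ)
        - robinSolDeriv β √(M ^ 2 - lam) δ * robinSol β √(m ^ 2 - lam) δ
        - robinSolDeriv β √(m ^ 2 - lam) δ * robinSol β √(M ^ 2 - lam) δ := by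
  have hP := (robinSol_pos hM δ).ne'
  have hQ := (robinSol_pos hm δ).ne'
  unfold secular robinLogDeriv
  field_simp

theorem IsXEigen.secular_eq_zero (h : IsXEigen δ β m M lam) (hM : β ^ 2 < M ^ 2 - lam)
    (hm : β ^ 2 < m ^ 2 - lam) : secular δ β m M lam = 0 := by
  obtain ⟨u, v, hu, hv, hnt, hodeu, hodev, hmatch, hjump, hrobu, hrobv⟩ := h
  obtain ⟨A, B, hAB, hA, hB⟩ :=
    exists_robinSol_repr hu hv hnt hodeu hodev hmatch hrobu hrobv hM hm
  have hmatch' : A * robinSol β √(M ^ 2 - lam) δ = B * robinSol β √(m ^ 2 - lam) δ := by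
    simpa only [(hA 0).1, (hB 0).1, zero_add, sub_zero] using hmatch
  rw [(hA 0).2, (hB 0).2, (hA 0).1, zero_add, sub_zero] at hjump
  have hP := robinSol_pos (abs_lt_sqrt_of_sq_lt hM) δ
  have hQ := robinSol_pos (abs_lt_sqrt_of_sq_lt hm) δ
  have hsec := secular_mul (δ := δ) (abs_lt_sqrt_of_sq_lt hM) (abs_lt_sqrt_of_sq_lt hm)
  have : secular δ β m M lam * (A * robinSol β √(M ^ 2 - lam) δ * robinSol β √(m ^ 2 - lam) δ)
      = 0 := by
    linear_combination A * hsec + robinSol β √(m ^ 2 - lam) δ * hjump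
      - robinSolDeriv β √(m ^ 2 - lam) δ * hmatch'
  simpa [left_ne_zero_of_mul hAB.ne', hP.ne', hQ.ne'] using this

theorem isXEigen_of_secular_eq_zero (hδ : 0 ≤ δ) (hM : β ^ 2 < M ^ 2 - lam)
    (hm : β ^ 2 < m ^ 2 - lam) (h : secular δ β m M lam = 0) : IsXEigen δ β m M lam := by
  set k := √(M ^ 2 - lam)
  set κ := √(m ^ 2 - lam)
  have hk : k ^ 2 = M ^ 2 - lam := sq_sqrt ((sq_nonneg β).trans hM.le)
  have hκ : κ ^ 2 = m ^ 2 - lam := sq_sqrt ((sq_nonneg β).trans hm.le)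
  have hP := robinSol_pos (abs_lt_sqrt_of_sq_lt hM) δ
  have hQ := robinSol_pos (abs_lt_sqrt_of_sq_lt hm) δ
  set P := robinSol β k δ
  set Q := robinSol β κ δ
  have hu : ∀ t, HasDerivAt (fun s => Q * robinSol β k (s + δ))
      (Q * robinSolDeriv β k (t + δ)) t :=
    fun t => (hasDerivAt_robinSol_add t).const_mul Q
  have hu' : ∀ t, HasDerivAt (fun s => Q * robinSolDeriv β k (s + δ))
      ((M ^ 2 - lam) * (Q * robinSol β k (t + δ))) t :=
    fun t => ((hasDerivAt_robinSolDeriv_add t).const_mul Q).congr_deriv (by rw [← hk]; ring)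
  have hv : ∀ t, HasDerivAt (fun s => P * robinSol β κ (δ - s))
      (P * -robinSolDeriv β κ (δ - t)) t :=
    fun t => (hasDerivAt_robinSol_sub t).const_mul P
  have hv' : ∀ t, HasDerivAt (fun s => P * -robinSolDeriv β κ (δ - s))
      ((m ^ 2 - lam) * (P * robinSol β κ (δ - t))) t :=
    fun t => ((hasDerivAt_neg_robinSolDeriv_sub t).const_mul P).congr_deriv
      (by rw [← hκ]; ring)
  refine ⟨fun s => Q * robinSol β k (s + δ), fun s => P * robinSol β κ (δ - s),
    contDiff_const.mul ((contDiff_robinSol β k).comp (contDiff_id.add contDiff_const)),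
    contDiff_const.mul ((contDiff_robinSol β κ).comp (contDiff_const.sub contDiff_id)),
    .inl ⟨0, ⟨by linarith, le_rfl⟩, by
      dsimp only; rw [zero_add]; exact mul_ne_zero hQ.ne' hP.ne'⟩,
    deriv_deriv_eq_of_hasDerivAt hu hu', deriv_deriv_eq_of_hasDerivAt hv hv',
    by dsimp only; rw [zero_add, sub_zero, mul_comm], ?_, ?_, ?_⟩
  · dsimp only
    rw [(hu 0).deriv, (hv 0).deriv, zero_add, sub_zero]
    linear_combination
      (P * Q) * h - secular_mul (abs_lt_sqrt_of_sq_lt hM) (abs_lt_sqrt_of_sq_lt hm)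
  · dsimp only
    rw [(hu (-δ)).deriv, neg_add_cancel, robinSolDeriv_zero]; ring
  · dsimp only
    rw [(hv δ).deriv, sub_self, robinSolDeriv_zero]; ring

/-- Two eigenfunctions below both thresholds have pieces of constant sign, so they cannot be
orthogonal; hence there is at most one such eigenvalue. -/
theorem IsXEigen.eq_of_lt_threshold {lam₁ lam₂ : ℝ} (hδ : 0 < δ) (h₁ : IsXEigen δ β m M lam₁)
    (h₂ : IsXEigen δ β m M lam₂) (hM₁ : β ^ 2 < M ^ 2 - lam₁) (hm₁ : β ^ 2 < m ^ 2 - lam₁)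
    (hM₂ : β ^ 2 < M ^ 2 - lam₂) (hm₂ : β ^ 2 < m ^ 2 - lam₂) : lam₁ = lam₂ := by
  by_contra hne
  obtain ⟨u₁, v₁, hu₁, hv₁, hnt₁, hodeu₁, hodev₁, hmatch₁, hjump₁, hrobu₁, hrobv₁⟩ := h₁
  obtain ⟨u₂, v₂, hu₂, hv₂, hnt₂, hodeu₂, hodev₂, hmatch₂, hjump₂, hrobu₂, hrobv₂⟩ := h₂
  have horth : (∫ s in (-δ)..0, u₁ s * u₂ s) + ∫ s in 0..δ, v₁ s * v₂ s = 0 := by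
    have gu := sub_mul_integral_mul_eq_wronskian (fun t => (hu₁.hasDerivAt_deriv t).1)
      (hu₁.hasDerivAt_deriv_of_deriv_deriv hodeu₁) (fun t => (hu₂.hasDerivAt_deriv t).1)
      (hu₂.hasDerivAt_deriv_of_deriv_deriv hodeu₂) (-δ) 0
    have gv := sub_mul_integral_mul_eq_wronskian (fun t => (hv₁.hasDerivAt_deriv t).1)
      (hv₁.hasDerivAt_deriv_of_deriv_deriv hodev₁) (fun t => (hv₂.hasDerivAt_deriv t).1)
      (hv₂.hasDerivAt_deriv_of_deriv_deriv hodev₂) 0 δ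
    have hWl : deriv u₁ (-δ) * u₂ (-δ) - u₁ (-δ) * deriv u₂ (-δ) = 0 := by
      rw [hrobu₁, hrobu₂]; ring
    have hWr : deriv v₁ δ * v₂ δ - v₁ δ * deriv v₂ δ = 0 := by
      rw [hrobv₁, hrobv₂]; ring
    have hW₀ : deriv v₁ 0 * v₂ 0 - v₁ 0 * deriv v₂ 0 =
        deriv u₁ 0 * u₂ 0 - u₁ 0 * deriv u₂ 0 := by
      rw [show deriv v₁ 0 = deriv u₁ 0 - (|m| + M) * u₁ 0 by linarith,
        show deriv v₂ 0 = deriv u₂ 0 - (|m| + M) * u₂ 0 by linarith, ← hmatch₁, ← hmatch₂]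
      ring
    have : (lam₂ - lam₁) * ((∫ s in (-δ)..0, u₁ s * u₂ s) + ∫ s in 0..δ, v₁ s * v₂ s) = 0 := by
      linear_combination gu + gv - hWl + hWr - hW₀
    exact (mul_eq_zero.mp this).resolve_left (sub_ne_zero.mpr (Ne.symm hne))
  obtain ⟨A₁, B₁, hAB₁, hA₁, hB₁⟩ :=
    exists_robinSol_repr hu₁ hv₁ hnt₁ hodeu₁ hodev₁ hmatch₁ hrobu₁ hrobv₁ hM₁ hm₁
  obtain ⟨A₂, B₂, hAB₂, hA₂, hB₂⟩ :=
    exists_robinSol_repr hu₂ hv₂ hnt₂ hodeu₂ hodev₂ hmatch₂ hrobu₂ hrobv₂ hM₂ hm₂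
  have hAB : 0 < A₁ * A₂ * (B₁ * B₂) := (mul_pos hAB₁ hAB₂).trans_eq (by ring)
  obtain ⟨I, hI, hIu⟩ := exists_integral_mul_eq_mul_pos (by linarith : -δ < 0)
    (fun t => (hA₁ t).1) (fun t => (hA₂ t).1) (by fun_prop) (by fun_prop)
    (fun t => robinSol_pos (abs_lt_sqrt_of_sq_lt hM₁) _)
    (fun t => robinSol_pos (abs_lt_sqrt_of_sq_lt hM₂) _)
  obtain ⟨J, hJ, hIv⟩ := exists_integral_mul_eq_mul_pos hδ
    (fun t => (hB₁ t).1) (fun t => (hB₂ t).1) (by fun_prop) (by fun_prop)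
    (fun t => robinSol_pos (abs_lt_sqrt_of_sq_lt hm₁) _)
    (fun t => robinSol_pos (abs_lt_sqrt_of_sq_lt hm₂) _)
  exact mul_add_mul_ne_zero hAB hI hJ (hIu ▸ hIv ▸ horth)

end Eigen

/- With `k = √(x² + t)` and `a = e^{-2xδ}`, the defect `k - robinLogDeriv β k δ` is at most
`6 k a`, which is below `k - x = t / (k + x)` as soon as `12 (x² + t) a < t`; the two bounds on
`x` give `12 x² a < t / 2` and `12 a ≤ 1 / 2`. -/
theorem lt_robinLogDeriv_sqrt {β δ x t : ℝ} (hδ : 0 < δ) (hx : 0 < x) (hβx : 2 * |β| ≤ x)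
    (hx₁ : 24 * x ^ 2 < exp (3 / 2 * δ * x)) (hx₂ : 24 ≤ exp (2 * δ * x))
    (ht : exp (-(x * δ / 2)) ≤ t) : x < robinLogDeriv β √(x ^ 2 + t) δ := by
  have ht₀ : 0 < t := (exp_pos _).trans_le ht
  set k := √(x ^ 2 + t)
  have hk2 : k ^ 2 = x ^ 2 + t := sq_sqrt (by positivity)
  have hxk : x < k := (lt_sqrt hx.le).2 (by linarith)
  set a := exp (-(2 * x * δ))
  have ha₀ : 0 < a := exp_pos _
  have ha₁ : 24 * a ≤ 1 := by
    have : a * exp (2 * δ * x) = 1 := by rw [← exp_add]; ring_nf; exact exp_zero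
    nlinarith
  have ha₂ : 24 * x ^ 2 * a < t := by
    have : a * exp (3 / 2 * δ * x) = exp (-(x * δ / 2)) := by rw [← exp_add]; ring_nf
    nlinarith
  have hdecay : k - robinLogDeriv β k δ ≤ 6 * k * a := by
    have : exp (-(2 * k * δ)) ≤ a := exp_le_exp.mpr (by nlinarith)
    refine (sub_robinLogDeriv_le δ (hβx.trans hxk.le) (hx.trans hxk)).trans ?_
    have hk₀ := hx.trans hxk
    gcongr
  have hgap : 6 * k * a < k - x := by
    refine lt_of_mul_lt_mul_right ?_ (by linarith : 0 ≤ k + x)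
    calc 6 * k * a * (k + x) ≤ 12 * k ^ 2 * a := by
          nlinarith [mul_pos (mul_pos (hx.trans hxk) ha₀) (sub_pos.2 hxk)]
      _ = 12 * x ^ 2 * a + 12 * t * a := by rw [hk2]; ring
      _ < t := by nlinarith
      _ = (k - x) * (k + x) := by linear_combination -hk2
  linarith

theorem eventually_lt_robinLogDeriv (β : ℝ) {δ : ℝ} (hδ : 0 < δ) :
    ∀ᶠ x in atTop, ∀ t, exp (-(x * δ / 2)) ≤ t → x < robinLogDeriv β √(x ^ 2 + t) δ := by
  have h₁ : ∀ᶠ x in atTop, 24 * x ^ 2 < exp (3 / 2 * δ * x) := by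
    filter_upwards [(isLittleO_pow_exp_pos_mul_atTop 2 (by positivity : 0 < 3 / 2 * δ)).bound
      (by norm_num : (0 : ℝ) < 1 / 48)] with x hx
    rw [norm_pow, Real.norm_eq_abs, sq_abs, Real.norm_eq_abs, abs_exp] at hx
    linarith [exp_pos (3 / 2 * δ * x)]
  have h₂ : ∀ᶠ x in atTop, 24 ≤ exp (2 * δ * x) :=
    (tendsto_exp_atTop.comp (tendsto_id.const_mul_atTop (by positivity))).eventually_ge_atTop _
  filter_upwards [h₁, h₂, eventually_gt_atTop 0, eventually_ge_atTop (2 * |β|)]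
    with x h₁ h₂ hx hβx t ht
  exact lt_robinLogDeriv_sqrt hδ hx hβx h₁ h₂ ht

section FirstEigenvalue

variable {δ β m M : ℝ}

theorem sq_lt_sq_sub_of_abs_lt {c lam : ℝ} (hc : |β| < |c|) (hlam : lam ≤ 0) :
    β ^ 2 < c ^ 2 - lam := by
  linarith [sq_lt_sq.2 hc]

theorem continuousOn_secular (hM : |β| < M) (hm : |β| < |m|) :
    ContinuousOn (secular δ β m M) (Iic 0) := by
  have hM' : |β| < |M| := hM.trans_le (le_abs_self M)
  refine (continuousOn_const.sub ((continuousOn_robinLogDeriv δ).comp (by fun_prop) ?_)).sub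
    ((continuousOn_robinLogDeriv δ).comp (by fun_prop) ?_)
  · exact fun lam hlam => abs_lt_sqrt_of_sq_lt (sq_lt_sq_sub_of_abs_lt hM' hlam)
  · exact fun lam hlam => abs_lt_sqrt_of_sq_lt (sq_lt_sq_sub_of_abs_lt hm hlam)

theorem secular_zero_pos (hM : |β| < M) (hm : |β| < |m|) : 0 < secular δ β m M 0 := by
  have hM' : 0 < M := (abs_nonneg β).trans_lt hM
  unfold secular
  rw [sub_zero, sub_zero, sqrt_sq hM'.le, sqrt_sq_eq_abs]
  linarith [robinLogDeriv_lt δ hM, robinLogDeriv_lt δ hm]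

theorem abs_sInf_isXEigen_le {ε : ℝ} (hδ : 0 ≤ δ) (hε : 0 ≤ ε) (hM : |β| < M) (hm : |β| < |m|)
    (hMε : ∀ t, ε ≤ t → M < robinLogDeriv β √(M ^ 2 + t) δ)
    (hmε : ∀ t, ε ≤ t → |m| < robinLogDeriv β √(|m| ^ 2 + t) δ) :
    |sInf {lam | IsXEigen δ β m M lam}| ≤ ε := by
  have hM' : |β| < |M| := hM.trans_le (le_abs_self M)
  have hneg : ∀ t, ε ≤ t → secular δ β m M (-t) < 0 := fun t ht => by
    have := hMε t ht
    have := hmε t ht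
    unfold secular
    rw [sub_neg_eq_add, sub_neg_eq_add, ← sq_abs m]
    linarith
  obtain ⟨lam₀, ⟨-, hlam₀⟩, hsec⟩ := intermediate_value_Icc (neg_nonpos.2 hε)
    ((continuousOn_secular hM hm).mono Icc_subset_Iic_self)
    ⟨(hneg ε le_rfl).le, (secular_zero_pos hM hm).le⟩
  have heig : IsXEigen δ β m M lam₀ := isXEigen_of_secular_eq_zero hδ
    (sq_lt_sq_sub_of_abs_lt hM' hlam₀) (sq_lt_sq_sub_of_abs_lt hm hlam₀) hsec
  have hlb : ∀ lam ∈ {lam | IsXEigen δ β m M lam}, -ε ≤ lam := fun lam hmem => by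
    by_contra! hlt
    have hlam : lam ≤ 0 := by linarith
    refine (hneg (-lam) (by linarith)).ne ?_
    rw [neg_neg]
    exact hmem.secular_eq_zero (sq_lt_sq_sub_of_abs_lt hM' hlam)
      (sq_lt_sq_sub_of_abs_lt hm hlam)
  rw [abs_le]
  exact ⟨le_csInf ⟨lam₀, heig⟩ hlb, (csInf_le ⟨-ε, hlb⟩ heig).trans (hlam₀.trans hε)⟩

end FirstEigenvalue

theorem exists_abs_sInf_isXEigen_le_exp (β : ℝ) {δ : ℝ} (hδ : 0 < δ) :
    ∃ ζ₀ : ℝ, ∀ m M : ℝ, m < 0 → ζ₀ ≤ min (-m) M →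
      |sInf {lam | IsXEigen δ β m M lam}| ≤ exp (-(min |m| M) * δ / 2) := by
  obtain ⟨ζ₀, hζ₀⟩ := eventually_atTop.1
    ((eventually_lt_robinLogDeriv β hδ).and (eventually_gt_atTop |β|))
  refine ⟨ζ₀, fun m M hm hζ => ?_⟩
  rw [← abs_of_neg hm] at hζ
  have side : ∀ x, min |m| M ≤ x → |β| < x ∧
      ∀ t, exp (-(min |m| M) * δ / 2) ≤ t → x < robinLogDeriv β √(x ^ 2 + t) δ :=
    fun x hx => ⟨(hζ₀ x (hζ.trans hx)).2, fun t ht =>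
      (hζ₀ x (hζ.trans hx)).1 t ((exp_le_exp.2 (by nlinarith)).trans ht)⟩
  obtain ⟨hM, hMε⟩ := side M (min_le_right _ _)
  obtain ⟨hm, hmε⟩ := side |m| (min_le_left _ _)
  exact abs_sInf_isXEigen_le hδ.le (exp_pos _).le hM hm hMε hmε

theorem min_sq_sub_sq_le_of_two_le {δ β m M : ℝ} (hδ : 0 < δ) {E : ℕ → ℝ}
    (hmono : ∀ i k : ℕ, 1 ≤ i → i < k → E i < E k)
    (heig : ∀ k : ℕ, 1 ≤ k → IsXEigen δ β m M (E k)) {j : ℕ} (hj : 2 ≤ j) :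
    min (m ^ 2) (M ^ 2) - β ^ 2 ≤ E j := by
  have hE₂ : min (m ^ 2) (M ^ 2) - β ^ 2 ≤ E 2 := by
    by_contra! h
    have h₁₂ := hmono 1 2 le_rfl one_lt_two
    have := min_le_left (m ^ 2) (M ^ 2)
    have := min_le_right (m ^ 2) (M ^ 2)
    exact h₁₂.ne ((heig 1 le_rfl).eq_of_lt_threshold hδ (heig 2 one_le_two)
      (by linarith) (by linarith) (by linarith) (by linarith))
  exact hE₂.trans (hj.eq_or_lt.elim (fun h => h ▸ le_rfl) fun h => (hmono 2 j one_le_two h).le)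

theorem stmt_8_general (δ β : ℝ) (hδ : 0 < δ) :
    (∃ C ζ₀ : ℝ, 0 < C ∧ ∀ m M : ℝ, m < 0 → 0 < M → ζ₀ ≤ min (-m) M →
      |sInf {lam | IsXEigen δ β m M lam}| ≤ C * Real.exp (-(min |m| M) * δ / 2)) ∧
    (∀ j : ℕ, 2 ≤ j → ∃ C₁ C₂ : ℝ, 0 < C₁ ∧ 0 < C₂ ∧
      ∀ m M : ℝ, m < 0 → 0 < M → ∀ E : ℕ → ℝ,
        (∀ i k : ℕ, 1 ≤ i → i < k → E i < E k) →
        (∀ k : ℕ, 1 ≤ k → IsXEigen δ β m M (E k)) →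
        (∀ lam, IsXEigen δ β m M lam → ∃ k : ℕ, 1 ≤ k ∧ E k = lam) →
        min (m ^ 2) (M ^ 2) + C₁ * (j : ℝ) ^ 2 - C₂ ≤ E j) := by
  refine ⟨?_, fun j hj => ?_⟩
  · obtain ⟨ζ₀, hζ₀⟩ := exists_abs_sInf_isXEigen_le_exp β hδ
    exact ⟨1, ζ₀, one_pos, fun m M hm _ hζ => (one_mul (exp _)).symm ▸ hζ₀ m M hm hζ⟩
  · have hj' : (2 : ℝ) ≤ j := by exact_mod_cast hj
    refine ⟨1, j ^ 2 + β ^ 2, one_pos, by nlinarith [sq_nonneg β],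
      fun m M _ _ E hmono heig _ => ?_⟩
    linarith [min_sq_sub_sq_le_of_two_le hδ hmono heig hj]

/-- `E₁(X) = O(e^{−min(|m|,M) δ/2})` as `min(−m, M) → +∞`, and for each `j ≥ 2` there
are constants `C₁, C₂ > 0` with `E_j(X) ≥ min(m², M²) + C₁ j² − C₂`, where `E` is the
increasing enumeration of the eigenvalues of `X` (`E j` the `j`-th eigenvalue, `j ≥ 1`). -/
theorem stmt_8 (δ β : ℝ) (hδ : 0 < δ) (hβ : 0 < β) :
    (∃ C ζ₀ : ℝ, 0 < C ∧ ∀ m M : ℝ, m < 0 → 0 < M → ζ₀ ≤ min (-m) M →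
      |sInf {lam | IsXEigen δ β m M lam}| ≤ C * Real.exp (-(min |m| M) * δ / 2)) ∧
    (∀ j : ℕ, 2 ≤ j → ∃ C₁ C₂ : ℝ, 0 < C₁ ∧ 0 < C₂ ∧
      ∀ m M : ℝ, m < 0 → 0 < M → ∀ E : ℕ → ℝ,
        (∀ i k : ℕ, 1 ≤ i → i < k → E i < E k) →
        (∀ k : ℕ, 1 ≤ k → IsXEigen δ β m M (E k)) →
        (∀ lam, IsXEigen δ β m M lam → ∃ k : ℕ, 1 ≤ k ∧ E k = lam) →
        min (m ^ 2) (M ^ 2) + C₁ * (j : ℝ) ^ 2 - C₂ ≤ E j) :=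
  stmt_8_general δ β hδ
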